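/- For every 𝒜 ∈ U(p,q) there exists a unique matrix Y ∈ 𝔫, i.e. a unique Y of the block form Y = (0, B; B*, 0) with B a p×q complex matrix, such that the matrix exponential e^Y equals √(𝒜*𝒜), the unique positive definite square root of 𝒜*𝒜. Moreover, 𝒜 can be written uniquely as 𝒜 = U e^Y with U a block diagonal unitary matrix (U ∈ U(p)×U(q)) and Y ∈ 𝔫, and this decomposition is the polar decomposition: U = 𝒜(√(𝒜*𝒜))⁻¹. -/

import Mathlib

/-!
Write J = I_{p,q}, so J² = 1 and 𝒜*J𝒜 = J forces 𝒜J𝒜* = J. Then J(𝒜*𝒜)J = (𝒜*𝒜)⁻¹, and since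
JSJ and S⁻¹ are positive square roots of this matrix, JSJ = S⁻¹. The Hermitian logarithm Y of S
therefore satisfies exp(JYJ) = exp(−Y), so JYJ = −Y by injectivity of exp on Hermitian matrices;
this anticommutation with J says exactly Y ∈ 𝔫. Similarly the unitary factor 𝒜S⁻¹ of the ordinary
polar decomposition commutes with J, hence is block diagonal. Uniqueness is uniqueness of the
polar decomposition: if 𝒜 = U e^Y with U unitary and Y Hermitian, then e^Y is positive with
square 𝒜*𝒜, so e^Y = S.
-/

open Matrix
open scoped ComplexOrder

/-- The matrix I_{p,q} = diag(I_p, −I_q) defining the indefinite Hermitian form of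
signature (p,q). -/
def Ipq (p q : ℕ) : Matrix (Fin p ⊕ Fin q) (Fin p ⊕ Fin q) ℂ :=
  Matrix.fromBlocks 1 0 0 (-1)

namespace Matrix

variable {m n : Type*}

theorem eq_neg_self_iff {R : Type*} [Ring R] [NoZeroDivisors R] [CharZero R]
    {M : Matrix m n R} : M = -M ↔ M = 0 := by
  simp only [← Matrix.ext_iff, neg_apply, CharZero.eq_neg_self_iff, zero_apply]

theorem conjTranspose_mul_self_fromBlocks_eq_one_iff [Fintype m] [Fintype n] [DecidableEq m]
    [DecidableEq n] {R : Type*} [Ring R] [StarRing R] {U₁ : Matrix m m R} {U₂ : Matrix n n R} :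
    (fromBlocks U₁ 0 0 U₂)ᴴ * fromBlocks U₁ 0 0 U₂ = 1 ↔ U₁ᴴ * U₁ = 1 ∧ U₂ᴴ * U₂ = 1 := by
  simp [fromBlocks_conjTranspose, fromBlocks_multiply, ← fromBlocks_one]

variable [Fintype n] [DecidableEq n]

section Spectral

/- `CFC.log` and its API need a normed algebra structure, supplied here by the L2 operator norm;
the statements use `cfc Real.log` (the unfolding of `CFC.log`) so as not to depend on it. -/
open scoped MatrixOrder Matrix.Norms.L2Operator

theorem IsHermitian.eq_of_exp_eq {Y Z : Matrix n n ℂ} (hY : Y.IsHermitian) (hZ : Z.IsHermitian)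
    (h : NormedSpace.exp Y = NormedSpace.exp Z) : Y = Z := by
  rw [← CFC.log_exp Y hY, h, CFC.log_exp Z hZ]

theorem IsHermitian.posSemidef_exp {Y : Matrix n n ℂ} (hY : Y.IsHermitian) :
    (NormedSpace.exp Y).PosSemidef :=
  nonneg_iff_posSemidef.mp (IsSelfAdjoint.exp_nonneg hY)

theorem isHermitian_cfc_log (S : Matrix n n ℂ) : (cfc Real.log S).IsHermitian :=
  cfc_predicate Real.log S

theorem PosDef.exp_cfc_log {S : Matrix n n ℂ} (hS : S.PosDef) :
    NormedSpace.exp (cfc Real.log S) = S :=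
  CFC.exp_log S hS.isStrictlyPositive

theorem PosSemidef.eq_of_mul_self_eq {A B : Matrix n n ℂ} (hA : A.PosSemidef)
    (hB : B.PosSemidef) (h : A * A = B * B) : A = B :=
  (CFC.mul_self_eq_mul_self_iff A B hA.nonneg hB.nonneg).mp h

end Spectral

section Polar

variable {A S : Matrix n n ℂ}

theorem PosDef.conjTranspose_mul_self_mul_inv (hS : S.PosDef) (hSS : S * S = Aᴴ * A) :
    (A * S⁻¹)ᴴ * (A * S⁻¹) = 1 := by
  have hdet : IsUnit S.det := hS.det_pos.ne'.isUnit
  rw [conjTranspose_mul, conjTranspose_nonsing_inv, hS.isHermitian.eq]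
  calc S⁻¹ * Aᴴ * (A * S⁻¹) = S⁻¹ * S * (S * S⁻¹) := by
        rw [Matrix.mul_assoc S⁻¹ S, ← Matrix.mul_assoc S, hSS]; simp only [Matrix.mul_assoc]
    _ = 1 := by rw [nonsing_inv_mul S hdet, mul_nonsing_inv S hdet, Matrix.one_mul]

theorem PosDef.eq_of_eq_unitary_mul {U P : Matrix n n ℂ} (hS : S.PosDef) (hSS : S * S = Aᴴ * A)
    (hU : Uᴴ * U = 1) (hP : P.PosSemidef) (hA : A = U * P) : U = A * S⁻¹ ∧ P = S := by
  have hPS : P = S := by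
    refine hP.eq_of_mul_self_eq hS.posSemidef ?_
    rw [hSS, hA, conjTranspose_mul, hP.isHermitian.eq, Matrix.mul_assoc P, ← Matrix.mul_assoc Uᴴ,
      hU, Matrix.one_mul]
  refine ⟨?_, hPS⟩
  rw [hA, hPS, Matrix.mul_assoc, mul_nonsing_inv S hS.det_pos.ne'.isUnit, Matrix.mul_one]

end Polar

section Involution

variable {J A S : Matrix n n ℂ}

theorem mul_mul_conjTranspose_eq_of_conjTranspose_mul_mul_eq (hJ : J * J = 1)
    (h : Aᴴ * J * A = J) : A * J * Aᴴ = J := by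
  have hAinv : A * (J * Aᴴ * J) = 1 := by
    refine mul_eq_one_comm.mp ?_
    calc J * Aᴴ * J * A = J * (Aᴴ * J * A) := by simp only [Matrix.mul_assoc]
      _ = 1 := by rw [h, hJ]
  calc A * J * Aᴴ = A * (J * Aᴴ * J) * J := by simp only [Matrix.mul_assoc, hJ, Matrix.mul_one]
    _ = J := by rw [hAinv, Matrix.one_mul]

theorem conj_eq_inv_of_mul_self_eq (hJ : J * J = 1) (hJH : Jᴴ = J) (h : Aᴴ * J * A = J)
    (hS : S.PosDef) (hSS : S * S = Aᴴ * A) : J * S * J = S⁻¹ := by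
  have hJJ (X : Matrix n n ℂ) : J * (J * X) = X := by rw [← Matrix.mul_assoc, hJ, Matrix.one_mul]
  have hAJA := mul_mul_conjTranspose_eq_of_conjTranspose_mul_mul_eq hJ h
  have hJSJ : (J * S * J).PosSemidef := by
    simpa only [hJH] using hS.posSemidef.conjTranspose_mul_mul_same J
  refine hJSJ.eq_of_mul_self_eq hS.inv.posSemidef ?_
  have hinv : J * (Aᴴ * A) * J = (Aᴴ * A)⁻¹ := by
    refine (inv_eq_left_inv ?_).symm
    calc J * (Aᴴ * A) * J * (Aᴴ * A) = J * (Aᴴ * (A * J * Aᴴ) * A) := by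
          simp only [Matrix.mul_assoc]
      _ = 1 := by rw [hAJA, h, hJ]
  calc J * S * J * (J * S * J) = J * (S * S) * J := by simp only [Matrix.mul_assoc, hJJ]
    _ = S⁻¹ * S⁻¹ := by rw [hSS, hinv, ← hSS, Matrix.mul_inv_rev]

theorem conj_cfc_log_eq_neg (hJ : J * J = 1) (hJH : Jᴴ = J) (hS : S.PosDef)
    (hJS : J * S * J = S⁻¹) : J * cfc Real.log S * J = -cfc Real.log S := by
  have hJinv : J⁻¹ = J := inv_eq_left_inv hJ
  refine IsHermitian.eq_of_exp_eq ?_ (isHermitian_cfc_log S).neg ?_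
  · simpa only [hJH] using isHermitian_conjTranspose_mul_mul J (isHermitian_cfc_log S)
  · calc NormedSpace.exp (J * cfc Real.log S * J) = J * NormedSpace.exp (cfc Real.log S) * J := by
          simpa only [hJinv] using exp_conj J (cfc Real.log S) ⟨⟨J, J, hJ, hJ⟩, rfl⟩
      _ = NormedSpace.exp (-cfc Real.log S) := by
          rw [hS.exp_cfc_log, hJS, exp_neg, hS.exp_cfc_log]

theorem conj_mul_inv_eq_self (hJ : J * J = 1) (h : Aᴴ * J * A = J) (hS : S.PosDef)
    (hSS : S * S = Aᴴ * A) (hJS : J * S * J = S⁻¹) : J * (A * S⁻¹) * J = A * S⁻¹ := by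
  have hAJA := mul_mul_conjTranspose_eq_of_conjTranspose_mul_mul_eq hJ h
  have hSJ : S⁻¹ * J = J * S := by rw [← hJS]; simp only [Matrix.mul_assoc, hJ, Matrix.mul_one]
  calc J * (A * S⁻¹) * J = J * A * J * S := by simp only [Matrix.mul_assoc, hSJ]
    _ = J * A * J * (S * S) * S⁻¹ := by
          simp only [Matrix.mul_assoc, mul_nonsing_inv S hS.det_pos.ne'.isUnit, Matrix.mul_one]
    _ = J * (A * J * Aᴴ) * A * S⁻¹ := by rw [hSS]; simp only [Matrix.mul_assoc]
    _ = A * S⁻¹ := by rw [hAJA, hJ, Matrix.one_mul]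

end Involution

end Matrix

section Ipq

variable {p q : ℕ}

theorem Ipq_mul_self : Ipq p q * Ipq p q = 1 := by
  simp [Ipq, fromBlocks_multiply, fromBlocks_one]

theorem Ipq_conjTranspose : (Ipq p q)ᴴ = Ipq p q := by
  simp [Ipq, fromBlocks_conjTranspose]

theorem Ipq_mul_fromBlocks_mul_Ipq (A : Matrix (Fin p) (Fin p) ℂ) (B : Matrix (Fin p) (Fin q) ℂ)
    (C : Matrix (Fin q) (Fin p) ℂ) (D : Matrix (Fin q) (Fin q) ℂ) :
    Ipq p q * fromBlocks A B C D * Ipq p q = fromBlocks A (-B) (-C) D := by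
  simp [Ipq, fromBlocks_multiply]

theorem exists_eq_fromBlocks_of_Ipq_conj_eq_neg {Y : Matrix (Fin p ⊕ Fin q) (Fin p ⊕ Fin q) ℂ}
    (hY : Y.IsHermitian) (h : Ipq p q * Y * Ipq p q = -Y) :
    ∃ B : Matrix (Fin p) (Fin q) ℂ, Y = fromBlocks 0 B Bᴴ 0 := by
  rw [← fromBlocks_toBlocks Y] at h hY ⊢
  rw [Ipq_mul_fromBlocks_mul_Ipq, fromBlocks_neg, fromBlocks_inj] at h
  obtain ⟨-, hBC, -, -⟩ := isHermitian_fromBlocks_iff.mp hY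
  rw [eq_neg_self_iff.mp h.1, eq_neg_self_iff.mp h.2.2.2, ← hBC]
  exact ⟨_, rfl⟩

theorem eq_fromBlocks_of_Ipq_conj_eq {U : Matrix (Fin p ⊕ Fin q) (Fin p ⊕ Fin q) ℂ}
    (h : Ipq p q * U * Ipq p q = U) : U = fromBlocks U.toBlocks₁₁ 0 0 U.toBlocks₂₂ := by
  conv at h => rw [← fromBlocks_toBlocks U, Ipq_mul_fromBlocks_mul_Ipq, fromBlocks_inj]
  conv_lhs => rw [← fromBlocks_toBlocks U]
  rw [eq_neg_self_iff.mp h.2.1.symm, eq_neg_self_iff.mp h.2.2.1.symm]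

end Ipq

theorem polar_decomposition_indefinite_unitary_general {p q : ℕ}
    (𝒜 : Matrix (Fin p ⊕ Fin q) (Fin p ⊕ Fin q) ℂ)
    (h𝒜 : 𝒜ᴴ * Ipq p q * 𝒜 = Ipq p q)
    (S : Matrix (Fin p ⊕ Fin q) (Fin p ⊕ Fin q) ℂ) (hS : S.PosDef) (hSS : S * S = 𝒜ᴴ * 𝒜) :
    (∃! Y : Matrix (Fin p ⊕ Fin q) (Fin p ⊕ Fin q) ℂ,
      (∃ B : Matrix (Fin p) (Fin q) ℂ, Y = Matrix.fromBlocks 0 B Bᴴ 0) ∧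
      NormedSpace.exp Y = S) ∧
    (∃! UY : Matrix (Fin p ⊕ Fin q) (Fin p ⊕ Fin q) ℂ ×
        Matrix (Fin p ⊕ Fin q) (Fin p ⊕ Fin q) ℂ,
      (∃ (U₁ : Matrix (Fin p) (Fin p) ℂ) (U₂ : Matrix (Fin q) (Fin q) ℂ),
        U₁ᴴ * U₁ = 1 ∧ U₂ᴴ * U₂ = 1 ∧ UY.1 = Matrix.fromBlocks U₁ 0 0 U₂) ∧
      (∃ B : Matrix (Fin p) (Fin q) ℂ, UY.2 = Matrix.fromBlocks 0 B Bᴴ 0) ∧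
      𝒜 = UY.1 * NormedSpace.exp UY.2) ∧
    (∀ UY : Matrix (Fin p ⊕ Fin q) (Fin p ⊕ Fin q) ℂ ×
        Matrix (Fin p ⊕ Fin q) (Fin p ⊕ Fin q) ℂ,
      ((∃ (U₁ : Matrix (Fin p) (Fin p) ℂ) (U₂ : Matrix (Fin q) (Fin q) ℂ),
        U₁ᴴ * U₁ = 1 ∧ U₂ᴴ * U₂ = 1 ∧ UY.1 = Matrix.fromBlocks U₁ 0 0 U₂) ∧
      (∃ B : Matrix (Fin p) (Fin q) ℂ, UY.2 = Matrix.fromBlocks 0 B Bᴴ 0) ∧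
      𝒜 = UY.1 * NormedSpace.exp UY.2) →
        UY.1 = 𝒜 * S⁻¹ ∧ NormedSpace.exp UY.2 = S) := by
  have hherm (B : Matrix (Fin p) (Fin q) ℂ) : (fromBlocks 0 B Bᴴ 0).IsHermitian :=
    .fromBlocks isHermitian_zero rfl isHermitian_zero
  have hlog (B : Matrix (Fin p) (Fin q) ℂ) (hB : NormedSpace.exp (fromBlocks 0 B Bᴴ 0) = S) :
      fromBlocks 0 B Bᴴ 0 = cfc Real.log S :=
    (hherm B).eq_of_exp_eq (isHermitian_cfc_log S) (hB.trans hS.exp_cfc_log.symm)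
  have hJS := conj_eq_inv_of_mul_self_eq Ipq_mul_self Ipq_conjTranspose h𝒜 hS hSS
  obtain ⟨B₀, hB₀⟩ := exists_eq_fromBlocks_of_Ipq_conj_eq_neg (isHermitian_cfc_log S)
    (conj_cfc_log_eq_neg Ipq_mul_self Ipq_conjTranspose hS hJS)
  have hU₀ := eq_fromBlocks_of_Ipq_conj_eq (conj_mul_inv_eq_self Ipq_mul_self h𝒜 hS hSS hJS)
  have hU₀unitary := hS.conjTranspose_mul_self_mul_inv hSS
  rw [hU₀, conjTranspose_mul_self_fromBlocks_eq_one_iff] at hU₀unitary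
  have hpolar {U₁ : Matrix (Fin p) (Fin p) ℂ} {U₂ : Matrix (Fin q) (Fin q) ℂ}
      {B : Matrix (Fin p) (Fin q) ℂ} (hU₁ : U₁ᴴ * U₁ = 1) (hU₂ : U₂ᴴ * U₂ = 1)
      (hA : 𝒜 = fromBlocks U₁ 0 0 U₂ * NormedSpace.exp (fromBlocks 0 B Bᴴ 0)) :
      fromBlocks U₁ 0 0 U₂ = 𝒜 * S⁻¹ ∧ NormedSpace.exp (fromBlocks 0 B Bᴴ 0) = S :=
    hS.eq_of_eq_unitary_mul hSS (conjTranspose_mul_self_fromBlocks_eq_one_iff.mpr ⟨hU₁, hU₂⟩)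
      (hherm B).posSemidef_exp hA
  refine ⟨⟨cfc Real.log S, ⟨⟨B₀, hB₀⟩, hS.exp_cfc_log⟩, ?_⟩,
    ⟨(𝒜 * S⁻¹, cfc Real.log S), ⟨⟨_, _, hU₀unitary.1, hU₀unitary.2, hU₀⟩, ⟨B₀, hB₀⟩, ?_⟩, ?_⟩, ?_⟩
  · rintro Y ⟨⟨B, rfl⟩, hexp⟩
    exact hlog B hexp
  · rw [hS.exp_cfc_log, Matrix.mul_assoc, nonsing_inv_mul S hS.det_pos.ne'.isUnit, Matrix.mul_one]
  · rintro ⟨-, -⟩ ⟨⟨U₁, U₂, hU₁, hU₂, rfl⟩, ⟨B, rfl⟩, hA⟩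
    obtain ⟨hU, hY⟩ := hpolar hU₁ hU₂ hA
    exact Prod.ext hU (hlog B hY)
  · rintro ⟨-, -⟩ ⟨⟨U₁, U₂, hU₁, hU₂, rfl⟩, ⟨B, rfl⟩, hA⟩
    exact hpolar hU₁ hU₂ hA

/-- For every 𝒜 ∈ U(p,q) there is a unique Y ∈ 𝔫, i.e. of block form
Y = (0, B; B*, 0), with e^Y = √(𝒜*𝒜) (the unique positive definite square root of 𝒜*𝒜, encoded
by `hS`/`hSS`).  Moreover 𝒜 = U e^Y with U ∈ U(p)×U(q) (block diagonal unitary) and Y ∈ 𝔫 in a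
unique way, and this decomposition is the polar decomposition: U = 𝒜(√(𝒜*𝒜))⁻¹ and e^Y = √(𝒜*𝒜). -/
theorem polar_decomposition_indefinite_unitary {p q : ℕ} (hp : 1 ≤ p) (hq : 1 ≤ q)
    (𝒜 : Matrix (Fin p ⊕ Fin q) (Fin p ⊕ Fin q) ℂ)
    (h𝒜 : 𝒜ᴴ * Ipq p q * 𝒜 = Ipq p q)
    (S : Matrix (Fin p ⊕ Fin q) (Fin p ⊕ Fin q) ℂ) (hS : S.PosDef) (hSS : S * S = 𝒜ᴴ * 𝒜) :
    (∃! Y : Matrix (Fin p ⊕ Fin q) (Fin p ⊕ Fin q) ℂ,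
      (∃ B : Matrix (Fin p) (Fin q) ℂ, Y = Matrix.fromBlocks 0 B Bᴴ 0) ∧
      NormedSpace.exp Y = S) ∧
    (∃! UY : Matrix (Fin p ⊕ Fin q) (Fin p ⊕ Fin q) ℂ ×
        Matrix (Fin p ⊕ Fin q) (Fin p ⊕ Fin q) ℂ,
      (∃ (U₁ : Matrix (Fin p) (Fin p) ℂ) (U₂ : Matrix (Fin q) (Fin q) ℂ),
        U₁ᴴ * U₁ = 1 ∧ U₂ᴴ * U₂ = 1 ∧ UY.1 = Matrix.fromBlocks U₁ 0 0 U₂) ∧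
      (∃ B : Matrix (Fin p) (Fin q) ℂ, UY.2 = Matrix.fromBlocks 0 B Bᴴ 0) ∧
      𝒜 = UY.1 * NormedSpace.exp UY.2) ∧
    (∀ UY : Matrix (Fin p ⊕ Fin q) (Fin p ⊕ Fin q) ℂ ×
        Matrix (Fin p ⊕ Fin q) (Fin p ⊕ Fin q) ℂ,
      ((∃ (U₁ : Matrix (Fin p) (Fin p) ℂ) (U₂ : Matrix (Fin q) (Fin q) ℂ),
        U₁ᴴ * U₁ = 1 ∧ U₂ᴴ * U₂ = 1 ∧ UY.1 = Matrix.fromBlocks U₁ 0 0 U₂) ∧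
      (∃ B : Matrix (Fin p) (Fin q) ℂ, UY.2 = Matrix.fromBlocks 0 B Bᴴ 0) ∧
      𝒜 = UY.1 * NormedSpace.exp UY.2) →
        UY.1 = 𝒜 * S⁻¹ ∧ NormedSpace.exp UY.2 = S) :=
  polar_decomposition_indefinite_unitary_general 𝒜 h𝒜 S hS hSS
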